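/- Let (Ω,ℱ,ℙ) be a probability space, X_1,…,X_d real random variables, Y ∈ L²(ℙ) with Var(Y) > 0, and D = {1,…,d}. Suppose E ⊊ D is nonempty, X_E is L²-exogenous, and for every A ⊆ D with |A| ≥ |E| and A ≠ E there is no square-integrable σ(X_{D\A})-measurable random variable f with Y = f almost surely. Then the proportional marginal effects satisfy PME_i = 0 for every i ∈ E and PME_j > 0 for every j ∈ D\E. -/

import Mathlib

open MeasureTheory ProbabilityTheory

/-- `σ(X_A)`: the σ-algebra generated by the random variables `(X_i)_{i ∈ A}`
(for `A = ∅` this is the trivial σ-algebra `⊥`). -/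
noncomputable def sigmaGen {Ω : Type*} {d : ℕ} (X : Fin d → Ω → ℝ) (A : Finset (Fin d)) :
    MeasurableSpace Ω :=
  ⨆ i ∈ A, MeasurableSpace.comap (X i) inferInstance

/-- `E[Var(Y | m)]`: the expectation of the conditional variance
`Var(Y | m) = E[(Y − E[Y | m])² | m]` of `Y` given the σ-algebra `m`. -/
noncomputable def meanCondVar {Ω : Type*} [mΩ : MeasurableSpace Ω] (μ : Measure Ω)
    (m : MeasurableSpace Ω) (Y : Ω → ℝ) : ℝ :=
  ∫ ω, (μ[fun ω' => (Y ω' - (μ[Y|m]) ω') ^ 2|m]) ω ∂μ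

/-- `S^T_A = E[Var(Y | σ(X_Ā))]/Var(Y)`: the total Sobol' index of the coalition `A`. -/
noncomputable def totalSobol {Ω : Type*} [mΩ : MeasurableSpace Ω] (μ : Measure Ω) {d : ℕ}
    (X : Fin d → Ω → ℝ) (Y : Ω → ℝ) (A : Finset (Fin d)) : ℝ :=
  meanCondVar μ (sigmaGen X (Finset.univ \ A)) Y / variance Y μ

open Finset

/-- The ratio potential `R(A, v)` of a cooperative game, defined recursively by
`R(∅, v) = 1` and `R(A, v) = v(A) · (Σ_{j∈A} R(A\{j}, v)⁻¹)⁻¹` for nonempty `A`. -/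
noncomputable def ratioPot {d : ℕ} (v : Finset (Fin d) → ℝ) (A : Finset (Fin d)) : ℝ :=
  if A = ∅ then 1
  else v A * (∑ j ∈ A.attach, (ratioPot v (A.erase j.1))⁻¹)⁻¹
termination_by A.card
decreasing_by exact Finset.card_erase_lt_of_mem j.2

-- The coalitions with null value.
open scoped Classical in
noncomputable def nullCoalitions {d : ℕ} (v : Finset (Fin d) → ℝ) : Finset (Finset (Fin d)) :=
  Finset.univ.filter (fun A => v A = 0)

/-- `k_max`: the cardinal of the largest null coalition. -/
noncomputable def kmax {d : ℕ} (v : Finset (Fin d) → ℝ) : ℕ :=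
  (nullCoalitions v).sup Finset.card

-- `𝒦`: the set of null coalitions of cardinal `k_max`.
open scoped Classical in
noncomputable def maxNullCoalitions {d : ℕ} (v : Finset (Fin d) → ℝ) :
    Finset (Finset (Fin d)) :=
  (nullCoalitions v).filter (fun A => A.card = kmax v)

-- `𝒦_{-i}`: the set of null coalitions of `D\{i}` of cardinal `k_max`.
open scoped Classical in
noncomputable def maxNullCoalitionsAvoiding {d : ℕ} (v : Finset (Fin d) → ℝ) (i : Fin d) :
    Finset (Finset (Fin d)) :=
  (maxNullCoalitions v).filter (fun A => i ∉ A)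

-- `PV⁰_i`: the extended proportional value of player `i` for a nonnegative monotonic
-- cooperative game, where `v_A(B) = v(A ∪ B)`.
open scoped Classical in
noncomputable def PV0 {d : ℕ} (v : Finset (Fin d) → ℝ) (i : Fin d) : ℝ :=
  if ∀ A ∈ maxNullCoalitions v, i ∈ A then 0
  else
    (∑ A ∈ maxNullCoalitionsAvoiding v i,
        (ratioPot (fun B => v (A ∪ B)) ((Finset.univ.erase i) \ A))⁻¹) /
    (∑ A ∈ maxNullCoalitions v, (ratioPot (fun B => v (A ∪ B)) (Finset.univ \ A))⁻¹)

/-!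
Exogeneity of `X_E` makes `E` a null coalition of the game `S^T`, because a
conditional variance vanishes exactly when `Y` is a.s. measurable for the conditioning
σ-algebra; the second hypothesis makes `S^T` positive on every other coalition of size at
least `|E|`. Hence `E` is the unique null coalition of maximal size, so `𝒦 = {E}`: players of
`E` get `PV⁰ = 0`, and for `j ∉ E` the value `PV⁰_j` is a quotient of inverse ratio potentials
of the game `B ↦ S^T(E ∪ B)`, which is positive on nonempty coalitions of `D \ E`.
-/

section ConditionalVariance

variable {Ω : Type*} {m mΩ : MeasurableSpace Ω} {μ : Measure Ω} {Y : Ω → ℝ}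

lemma meanCondVar_nonneg : 0 ≤ meanCondVar μ m Y :=
  integral_nonneg_of_ae (condExp_nonneg (.of_forall fun _ => sq_nonneg _))

lemma meanCondVar_eq_integral_sq (hm : m ≤ mΩ) [SigmaFinite (μ.trim hm)] :
    meanCondVar μ m Y = ∫ ω, (Y ω - (μ[Y|m]) ω) ^ 2 ∂μ :=
  integral_condExp hm

lemma meanCondVar_eq_zero_iff [IsFiniteMeasure μ] (hm : m ≤ mΩ) (hY : MemLp Y 2 μ) :
    meanCondVar μ m Y = 0 ↔ ∃ f : Ω → ℝ, MemLp f 2 μ ∧ Measurable[m] f ∧ Y =ᵐ[μ] f := by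
  have hsq : Integrable (fun ω => (Y ω - (μ[Y|m]) ω) ^ 2) μ :=
    (hY.sub (hY.condExp one_le_two)).integrable_sq
  rw [meanCondVar_eq_integral_sq hm,
    integral_eq_zero_iff_of_nonneg (fun _ => sq_nonneg _) hsq]
  constructor
  · intro hzero
    refine ⟨μ[Y|m], hY.condExp one_le_two, stronglyMeasurable_condExp.measurable, ?_⟩
    filter_upwards [hzero] with ω hω
    exact sub_eq_zero.mp (pow_eq_zero_iff two_ne_zero |>.mp hω)
  · rintro ⟨f, hf, hfm, hYf⟩
    have hcond : μ[Y|m] =ᵐ[μ] f := (condExp_congr_ae hYf).trans <| by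
      rw [condExp_of_stronglyMeasurable hm hfm.stronglyMeasurable (hf.integrable one_le_two)]
    filter_upwards [hYf, hcond] with ω hYω hcondω
    simp [hYω, hcondω]

end ConditionalVariance

section TotalSobol

variable {Ω : Type*} {mΩ : MeasurableSpace Ω} {μ : Measure Ω} {d : ℕ} {X : Fin d → Ω → ℝ}
  {Y : Ω → ℝ}

lemma sigmaGen_le (hX : ∀ i, Measurable (X i)) (A : Finset (Fin d)) : sigmaGen X A ≤ mΩ :=
  iSup₂_le fun i _ => (hX i).comap_le

lemma totalSobol_nonneg (A : Finset (Fin d)) : 0 ≤ totalSobol μ X Y A :=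
  div_nonneg meanCondVar_nonneg (variance_nonneg _ _)

lemma totalSobol_eq_zero_iff [IsFiniteMeasure μ] (hX : ∀ i, Measurable (X i))
    (hY : MemLp Y 2 μ) (hvar : 0 < variance Y μ) (A : Finset (Fin d)) :
    totalSobol μ X Y A = 0 ↔ ∃ f : Ω → ℝ, MemLp f 2 μ ∧
      Measurable[sigmaGen X (univ \ A)] f ∧ Y =ᵐ[μ] f := by
  rw [totalSobol, div_eq_zero_iff, or_iff_left hvar.ne',
    meanCondVar_eq_zero_iff (sigmaGen_le hX _) hY]

end TotalSobol

section ProportionalValue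

variable {d : ℕ} {v : Finset (Fin d) → ℝ}

lemma ratioPot_pos (A : Finset (Fin d)) (hv : ∀ B ⊆ A, B.Nonempty → 0 < v B) :
    0 < ratioPot v A := by
  induction A using Finset.strongInduction with
  | _ A ih =>
    rw [ratioPot]
    split_ifs with hA
    · exact one_pos
    have hA : A.Nonempty := nonempty_iff_ne_empty.mpr hA
    refine mul_pos (hv A Subset.rfl hA) (inv_pos.mpr (sum_pos (fun j _ => ?_) (by simpa)))
    exact inv_pos.mpr <| ih _ (erase_ssubset j.2) fun B hB =>
      hv B (hB.trans (erase_subset _ _))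

variable {E : Finset (Fin d)}

lemma kmax_eq_card (hE : v E = 0)
    (hpos : ∀ A : Finset (Fin d), E.card ≤ A.card → A ≠ E → 0 < v A) : kmax v = E.card := by
  refine le_antisymm (Finset.sup_le fun A hA => ?_)
    (Finset.le_sup (by simpa [nullCoalitions] using hE))
  by_contra! hlt
  exact (hpos A hlt.le (by rintro rfl; exact lt_irrefl _ hlt)).ne'
    (by simpa [nullCoalitions] using hA)

lemma maxNullCoalitions_eq_singleton (hE : v E = 0)
    (hpos : ∀ A : Finset (Fin d), E.card ≤ A.card → A ≠ E → 0 < v A) :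
    maxNullCoalitions v = {E} := by
  ext A
  simp only [maxNullCoalitions, nullCoalitions, mem_filter, mem_univ, true_and, mem_singleton,
    kmax_eq_card hE hpos]
  constructor
  · rintro ⟨hA, hcard⟩
    by_contra hne
    exact (hpos A hcard.ge hne).ne' hA
  · rintro rfl
    exact ⟨hE, rfl⟩

lemma PV0_eq_zero_of_mem (hE : v E = 0)
    (hpos : ∀ A : Finset (Fin d), E.card ≤ A.card → A ≠ E → 0 < v A) {i : Fin d} (hi : i ∈ E) :
    PV0 v i = 0 := by
  rw [PV0, if_pos]
  simpa [maxNullCoalitions_eq_singleton hE hpos] using hi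

lemma PV0_pos_of_notMem (hE : v E = 0)
    (hpos : ∀ A : Finset (Fin d), E.card ≤ A.card → A ≠ E → 0 < v A) {j : Fin d} (hj : j ∉ E) :
    0 < PV0 v j := by
  have hK := maxNullCoalitions_eq_singleton hE hpos
  have hKj : maxNullCoalitionsAvoiding v j = {E} := by
    rw [maxNullCoalitionsAvoiding, hK, filter_singleton, if_pos hj]
  have hvE : ∀ B ⊆ univ \ E, B.Nonempty → 0 < v (E ∪ B) := fun B hB ⟨b, hb⟩ =>
    hpos _ (card_le_card subset_union_left) fun h =>
      (mem_sdiff.mp (hB hb)).2 (union_eq_left.mp h hb)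
  rw [PV0, if_neg (by simpa [hK]), hKj, hK, sum_singleton, sum_singleton]
  refine div_pos (inv_pos.mpr (ratioPot_pos _ fun B hB => hvE B ?_))
    (inv_pos.mpr (ratioPot_pos _ hvE))
  exact hB.trans (sdiff_subset_sdiff (erase_subset _ _) Subset.rfl)

end ProportionalValue

theorem pme_exogeneity_general {Ω : Type*} {mΩ : MeasurableSpace Ω} (μ : Measure Ω)
    [IsProbabilityMeasure μ] {d : ℕ} (X : Fin d → Ω → ℝ) (hX : ∀ i, Measurable (X i))
    (Y : Ω → ℝ) (hY : MemLp Y 2 μ) (hvar : 0 < variance Y μ)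
    (E : Finset (Fin d))
    (hexo : ∀ B ⊆ E, ∃ f : Ω → ℝ, MemLp f 2 μ ∧
      Measurable[sigmaGen X (Finset.univ \ B)] f ∧ Y =ᵐ[μ] f)
    (hlargest : ∀ A : Finset (Fin d), E.card ≤ A.card → A ≠ E →
      ¬∃ f : Ω → ℝ, MemLp f 2 μ ∧ Measurable[sigmaGen X (Finset.univ \ A)] f ∧ Y =ᵐ[μ] f) :
    (∀ i ∈ E, PV0 (totalSobol μ X Y) i = 0) ∧
    (∀ j ∉ E, 0 < PV0 (totalSobol μ X Y) j) := by
  have hnull := totalSobol_eq_zero_iff (μ := μ) hX hY hvar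
  have hE : totalSobol μ X Y E = 0 := (hnull E).mpr (hexo E Subset.rfl)
  have hpos : ∀ A : Finset (Fin d), E.card ≤ A.card → A ≠ E → 0 < totalSobol μ X Y A :=
    fun A hcard hne => (totalSobol_nonneg A).lt_of_ne' (mt (hnull A).mp (hlargest A hcard hne))
  exact ⟨fun i => PV0_eq_zero_of_mem hE hpos, fun j => PV0_pos_of_notMem hE hpos⟩

/-- if `E ⊊ D` is nonempty, `X_E` is `L²`-exogenous, and no coalition `A ≠ E`
with `|A| ≥ |E|` admits a square-integrable `σ(X_{D\A})`-measurable representative of `Y`,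
then the proportional marginal effects `PME_i = PV⁰_i(D, S^T)` vanish on `E` and are
positive outside of `E`. -/
theorem pme_exogeneity {Ω : Type*} {mΩ : MeasurableSpace Ω} (μ : Measure Ω)
    [IsProbabilityMeasure μ] {d : ℕ} (X : Fin d → Ω → ℝ) (hX : ∀ i, Measurable (X i))
    (Y : Ω → ℝ) (hY : MemLp Y 2 μ) (hvar : 0 < variance Y μ)
    (E : Finset (Fin d)) (hEne : E.Nonempty) (hEproper : E ⊂ Finset.univ)
    (hexo : ∀ B ⊆ E, ∃ f : Ω → ℝ, MemLp f 2 μ ∧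
      Measurable[sigmaGen X (Finset.univ \ B)] f ∧ Y =ᵐ[μ] f)
    (hlargest : ∀ A : Finset (Fin d), E.card ≤ A.card → A ≠ E →
      ¬∃ f : Ω → ℝ, MemLp f 2 μ ∧ Measurable[sigmaGen X (Finset.univ \ A)] f ∧ Y =ᵐ[μ] f) :
    (∀ i ∈ E, PV0 (totalSobol μ X Y) i = 0) ∧
    (∀ j ∉ E, 0 < PV0 (totalSobol μ X Y) j) :=
  pme_exogeneity_general (mΩ := mΩ) μ X hX Y hY hvar E hexo hlargest
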